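/- Let F be a field, M an n×n matrix over F, and I ⊆ {1,…,n} with complement J. Let Z₁ be the diagonal matrix with (Z₁)_{jj} = 1 for j ∈ J and (Z₁)_{ii} = 0 for i ∈ I, and Z₂ the diagonal matrix with (Z₂)_{ii} = 1 for i ∈ I and (Z₂)_{jj} = 0 for j ∈ J. Then there is a sign ε ∈ {1, −1} such that the determinant of the 2n×2n block matrix [[Z₁, Z₂],[M, λI]] equals ε · det(M_I) · λ^{|J|}, where M_I is the principal submatrix of M with rows and columns indexed by I and |J| is the cardinality of J. -/

import Mathlib

open Matrix Polynomial

/-! Right multiplication by the block matrix `[[λ, 0], [-M, 1]]` clears the lower left block, so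
after cancelling `λ ^ n` the determinant is `det (λ Z₁ - Z₂ M)`. The rows of `λ Z₁ - Z₂ M`
indexed by `I` are those of `-M` and the others are `λ` times unit rows; listing `I` first makes
it block upper triangular with diagonal blocks `-M_I` and `λ • 1`. -/

namespace Matrix

variable {ι R : Type*} [Fintype ι] [DecidableEq ι] [CommRing R]

theorem det_fromBlocks_smul_one₂₂ {d : R} (hd : d ∈ nonZeroDivisors R)
    (A B C : Matrix ι ι R) :
    (fromBlocks A B C (d • 1)).det = (d • A - B * C).det := by
  have hcol : fromBlocks A B C (d • 1) * fromBlocks (d • 1) 0 (-C) 1 =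
      fromBlocks (d • A - B * C) B 0 (d • 1) := by
    simp [fromBlocks_multiply, sub_eq_add_neg]
  have := congrArg det hcol
  simp only [det_mul, det_fromBlocks_zero₁₂, det_fromBlocks_zero₂₁, det_smul, det_one,
    mul_one] at this
  rw [mul_comm, mul_comm (det _)] at this
  exact (mul_cancel_left_mem_nonZeroDivisors (pow_mem hd _)).mp this

theorem det_smul_diagonal_sub_diagonal_mul (d : R) (I : Finset ι) (C : Matrix ι ι R) :
    (d • diagonal (fun i => if i ∈ I then 0 else 1) -
        diagonal (fun i => if i ∈ I then 1 else 0) * C).det =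
      (-1) ^ I.card * (C.submatrix ((↑) : I → ι) (↑)).det * d ^ Iᶜ.card := by
  set e : I ⊕ {i // i ∉ I} ≃ ι := Equiv.sumCompl (· ∈ I)
  have hblock : (d • diagonal (fun i => if i ∈ I then 0 else 1) -
        diagonal (fun i => if i ∈ I then 1 else 0) * C).submatrix e e =
      fromBlocks (-C.submatrix (↑) (↑)) (-C.submatrix (↑) (↑)) 0 (d • 1) := by
    ext (⟨i, hi⟩ | ⟨i, hi⟩) (⟨j, hj⟩ | ⟨j, hj⟩) <;>
      simp [e, diagonal_mul, one_apply, diagonal_apply, hi]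
    rintro rfl
    exact absurd hj hi
  rw [← det_submatrix_equiv_self e, hblock, det_fromBlocks_zero₂₁, det_neg, det_smul, det_one]
  simp [Fintype.card_subtype_compl, Finset.card_compl]

theorem det_submatrix_orderEmbOfFin {α : Type*} [LinearOrder α] (A : Matrix α α R)
    (I : Finset α) :
    (A.submatrix (I.orderEmbOfFin rfl) (I.orderEmbOfFin rfl)).det =
      (A.submatrix ((↑) : I → α) (↑)).det := by
  have : A.submatrix (I.orderEmbOfFin rfl) (I.orderEmbOfFin rfl) =
      (A.submatrix ((↑) : I → α) (↑)).submatrix (I.orderIsoOfFin rfl).toEquiv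
        (I.orderIsoOfFin rfl).toEquiv := by
    ext i j
    simp [Finset.coe_orderIsoOfFin_apply]
  rw [this, det_submatrix_equiv_self]

end Matrix

/-- Let `M` be an `n × n` matrix over a field `F` and `I ⊆ {1, …, n}` with complement `J`.
Let `Z₁` be the diagonal matrix with `(Z₁)ⱼⱼ = 1` for `j ∈ J` and `(Z₁)ᵢᵢ = 0` for `i ∈ I`,
and `Z₂` the diagonal matrix with `(Z₂)ᵢᵢ = 1` for `i ∈ I` and `(Z₂)ⱼⱼ = 0` for `j ∈ J`.
Then, for some sign `ε ∈ {1, -1}`, the determinant of the `2n × 2n` block matrix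
`[[Z₁, Z₂], [M, λ I]]` equals `ε * det M_I * λ ^ |J|`, where `M_I` is the principal
submatrix of `M` with rows and columns indexed by `I`. -/
theorem det_fromBlocks_diagonal_indicator {F : Type*} [Field F] {n : ℕ}
    (M : Matrix (Fin n) (Fin n) F) (I : Finset (Fin n)) :
    ∃ ε : F, (ε = 1 ∨ ε = -1) ∧
      (Matrix.fromBlocks
          ((Matrix.diagonal fun i : Fin n => if i ∈ I then (0 : F) else 1).map Polynomial.C)
          ((Matrix.diagonal fun i : Fin n => if i ∈ I then (1 : F) else 0).map Polynomial.C)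
          (M.map Polynomial.C)
          ((Polynomial.X : Polynomial F) • 1)).det =
        Polynomial.C (ε * (M.submatrix (I.orderEmbOfFin rfl) (I.orderEmbOfFin rfl)).det) *
          Polynomial.X ^ (Iᶜ.card) := by
  refine ⟨(-1) ^ I.card, neg_one_pow_eq_or F _, ?_⟩
  simp only [diagonal_map (map_zero C), apply_ite C, map_zero, map_one]
  rw [det_fromBlocks_smul_one₂₂ (X_mem_nonzeroDivisors (R := F)),
    det_smul_diagonal_sub_diagonal_mul, det_submatrix_orderEmbOfFin, C_mul, map_pow, map_neg,
    map_one, RingHom.map_det]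
  rfl
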